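/- Let f, g : ℝⁿ → ℝ be C³ on B(x⁰, Δ̄), let S ∈ ℝ^{n×m} and T ∈ ℝ^{n×k} have full row rank with B(x⁰+sⁱ; Δ_T) ⊂ B(x⁰; Δ̄) for all i. Suppose the gradient approximations satisfy ‖∇_s f(x⁰;T) − ∇f(x⁰)‖ ≤ E_f Δ_u and ‖∇_s g(x⁰;T) − ∇g(x⁰)‖ ≤ E_g Δ_u, and the Hessian approximations satisfy ‖∇²_s f(x⁰;S,T) − ∇²f(x⁰)‖ ≤ E_F Δ_u and ‖∇²_s g(x⁰;S,T) − ∇²g(x⁰)‖ ≤ E_G Δ_u. Define the simplex calculus Hessian ∇²_{sc}(fg) = g(x⁰)∇²_s f + f(x⁰)∇²_s g + ∇_s f(∇_s g)ᵀ + ∇_s g(∇_s f)ᵀ. Then ‖∇²_{sc}(fg)(x⁰;S,T) − ∇²(fg)(x⁰)‖ ≤ (E_F|g(x⁰)| + E_G|f(x⁰)| + 2(E_f E_g Δ_u + E_g‖∇f(x⁰)‖ + E_f‖∇g(x⁰)‖))Δ_u. -/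

import Mathlib

/-!
Both `∇²_sc(fg)` and `∇²(fg)(x⁰)` are the product-rule expression
`g ∇²f + f ∇²g + a bᵀ + b aᵀ`, the first with the simplex approximations and the second with
the exact derivatives (Leibniz rule for second derivatives). Their difference is therefore
`g(x⁰)(∇²_s f − ∇²f) + f(x⁰)(∇²_s g − ∇²g)` plus two differences of rank-one matrices, and
`a bᵀ − p qᵀ = (a − p)(b − q)ᵀ + (a − p) qᵀ + p (b − q)ᵀ` with `‖u vᵀ‖ ≤ ‖u‖ ‖v‖`.
The Leibniz rule needs `f`, `g` to be `C²` near `x⁰`, and `x⁰` is interior to `B(x⁰, Δ̄)`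
because the full row rank of `T` forces `Δ_T > 0` (for `n = 0` all matrices are empty).
-/

open Matrix Metric

/-- The induced 2-norm (operator norm) of a matrix. -/
noncomputable def opNorm {m n : ℕ} (A : Matrix (Fin m) (Fin n) ℝ) : ℝ :=
  ‖LinearMap.toContinuousLinearMap (Matrix.toEuclideanLin A)‖

/-- The Hessian matrix of f at x. -/
noncomputable def hess {n : ℕ} (f : EuclideanSpace ℝ (Fin n) → ℝ)
    (x : EuclideanSpace ℝ (Fin n)) : Matrix (Fin n) (Fin n) ℝ :=
  Matrix.of fun i j =>
    iteratedFDeriv ℝ 2 f x ![EuclideanSpace.single i 1, EuclideanSpace.single j 1]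

/-- The generalized simplex gradient ∇_s f(y;T) = (Tᵀ)† δ_f(y;T); since T has
full row rank, (Tᵀ)† = (T Tᵀ)⁻¹ T. -/
noncomputable def simplexGrad {n k : ℕ} (f : EuclideanSpace ℝ (Fin n) → ℝ)
    (t : Fin k → EuclideanSpace ℝ (Fin n)) (T : Matrix (Fin n) (Fin k) ℝ)
    (y : EuclideanSpace ℝ (Fin n)) : Fin n → ℝ :=
  ((T * Tᵀ)⁻¹ * T).mulVec fun j => f (y + t j) - f y

/-- The nested-set Hessian ∇²_s f(x⁰;S,T) = (Sᵀ)† δ_{∇_s f}(x⁰;S,T); since S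
has full row rank, (Sᵀ)† = (S Sᵀ)⁻¹ S.  The i-th row of δ_{∇_s f} is
(∇_s f(x⁰+sⁱ;T) − ∇_s f(x⁰;T))ᵀ. -/
noncomputable def nestedSetHessian {n m k : ℕ} (f : EuclideanSpace ℝ (Fin n) → ℝ)
    (s : Fin m → EuclideanSpace ℝ (Fin n)) (S : Matrix (Fin n) (Fin m) ℝ)
    (t : Fin k → EuclideanSpace ℝ (Fin n)) (T : Matrix (Fin n) (Fin k) ℝ)
    (x0 : EuclideanSpace ℝ (Fin n)) : Matrix (Fin n) (Fin n) ℝ :=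
  ((S * Sᵀ)⁻¹ * S) *
    Matrix.of fun i j => simplexGrad f t T (x0 + s i) j - simplexGrad f t T x0 j

/-- Reinterpret a plain vector as an element of Euclidean space. -/
noncomputable def toE {n : ℕ} (v : Fin n → ℝ) : EuclideanSpace ℝ (Fin n) :=
  (WithLp.equiv 2 (Fin n → ℝ)).symm v

open Filter Topology
open scoped Matrix.Norms.L2Operator

lemma opNorm_eq_l2_opNorm {m n : ℕ} (A : Matrix (Fin m) (Fin n) ℝ) : opNorm A = ‖A‖ := rfl

section ProductHessian

variable {ι : Type*} [Fintype ι] [DecidableEq ι]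

lemma l2_opNorm_vecMulVec_le (a b : EuclideanSpace ℝ ι) :
    ‖vecMulVec (WithLp.ofLp a) (WithLp.ofLp b)‖ ≤ ‖a‖ * ‖b‖ := by
  rw [l2_opNorm_def]
  refine ContinuousLinearMap.opNorm_le_bound _ (by positivity) fun x => ?_
  have hx : toEuclideanLin (vecMulVec (WithLp.ofLp a) (WithLp.ofLp b)) x = inner ℝ b x • a := by
    ext i
    simp [vecMulVec_mulVec, EuclideanSpace.inner_eq_star_dotProduct, dotProduct_comm, mul_comm]
  calc ‖toEuclideanLin (vecMulVec (WithLp.ofLp a) (WithLp.ofLp b)) x‖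
      = |inner ℝ b x| * ‖a‖ := by rw [hx, norm_smul, Real.norm_eq_abs]
    _ ≤ ‖b‖ * ‖x‖ * ‖a‖ := by gcongr; exact abs_real_inner_le_norm b x
    _ = ‖a‖ * ‖b‖ * ‖x‖ := by ring

lemma l2_opNorm_vecMulVec_sub_vecMulVec_le (a b p q : EuclideanSpace ℝ ι) :
    ‖vecMulVec (WithLp.ofLp a) (WithLp.ofLp b) - vecMulVec (WithLp.ofLp p) (WithLp.ofLp q)‖
      ≤ ‖a - p‖ * ‖b - q‖ + ‖a - p‖ * ‖q‖ + ‖p‖ * ‖b - q‖ := by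
  have hsplit :
      vecMulVec (WithLp.ofLp a) (WithLp.ofLp b) - vecMulVec (WithLp.ofLp p) (WithLp.ofLp q)
        = vecMulVec (WithLp.ofLp (a - p)) (WithLp.ofLp (b - q))
          + vecMulVec (WithLp.ofLp (a - p)) (WithLp.ofLp q)
          + vecMulVec (WithLp.ofLp p) (WithLp.ofLp (b - q)) := by
    ext i j
    simp only [Matrix.sub_apply, Matrix.add_apply, vecMulVec_apply, WithLp.ofLp_sub, Pi.sub_apply]
    ring
  rw [hsplit]
  refine (norm_add₃_le ..).trans ?_
  gcongr <;> exact l2_opNorm_vecMulVec_le _ _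

/-- `g ∇²f + f ∇²g + ∇f ∇gᵀ + ∇g ∇fᵀ` with `u = f(x)`, `v = g(x)`, `A = ∇²f`, `B = ∇²g`,
`a = ∇f`, `b = ∇g`. -/
noncomputable def productHessian (u v : ℝ) (A B : Matrix ι ι ℝ) (a b : EuclideanSpace ℝ ι) :
    Matrix ι ι ℝ :=
  v • A + u • B + vecMulVec (WithLp.ofLp a) (WithLp.ofLp b)
    + vecMulVec (WithLp.ofLp b) (WithLp.ofLp a)

lemma l2_opNorm_productHessian_sub_le (u v : ℝ) (A B H K : Matrix ι ι ℝ)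
    (a b p q : EuclideanSpace ℝ ι) :
    ‖productHessian u v A B a b - productHessian u v H K p q‖
      ≤ |v| * ‖A - H‖ + |u| * ‖B - K‖
        + 2 * (‖a - p‖ * ‖b - q‖ + ‖a - p‖ * ‖q‖ + ‖p‖ * ‖b - q‖) := by
  have hsplit : productHessian u v A B a b - productHessian u v H K p q
      = v • (A - H) + u • (B - K)
        + (vecMulVec (WithLp.ofLp a) (WithLp.ofLp b) - vecMulVec (WithLp.ofLp p) (WithLp.ofLp q))
        + (vecMulVec (WithLp.ofLp b) (WithLp.ofLp a)
          - vecMulVec (WithLp.ofLp q) (WithLp.ofLp p)) := by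
    simp only [productHessian, smul_sub]
    abel
  have hab := l2_opNorm_vecMulVec_sub_vecMulVec_le a b p q
  have hba := l2_opNorm_vecMulVec_sub_vecMulVec_le b a q p
  rw [hsplit]
  refine (norm_add₄_le ..).trans ?_
  rw [norm_smul, norm_smul, Real.norm_eq_abs, Real.norm_eq_abs]
  linarith

end ProductHessian

section SecondDerivative

variable {E : Type*} [NormedAddCommGroup E] [NormedSpace ℝ E]

lemma fderiv_fderiv_mul_apply {f g : E → ℝ} {x : E} (hf : ContDiffAt ℝ 2 f x)
    (hg : ContDiffAt ℝ 2 g x) (v w : E) :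
    fderiv ℝ (fderiv ℝ fun y => f y * g y) x v w
      = g x * fderiv ℝ (fderiv ℝ f) x v w + f x * fderiv ℝ (fderiv ℝ g) x v w
        + fderiv ℝ f x v * fderiv ℝ g x w + fderiv ℝ g x v * fderiv ℝ f x w := by
  have hfg : (fderiv ℝ fun y => f y * g y)
      =ᶠ[𝓝 x] fun y => f y • fderiv ℝ g y + g y • fderiv ℝ f y := by
    filter_upwards [hf.eventually (by simp), hg.eventually (by simp)] with y hfy hgy
    exact fderiv_mul (hfy.differentiableAt (by simp)) (hgy.differentiableAt (by simp))
  have hD2f : DifferentiableAt ℝ (fderiv ℝ f) x :=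
    (hf.fderiv_right (m := 1) le_rfl).differentiableAt (by simp)
  have hD2g : DifferentiableAt ℝ (fderiv ℝ g) x :=
    (hg.fderiv_right (m := 1) le_rfl).differentiableAt (by simp)
  have hderiv : HasFDerivAt (fun y => f y • fderiv ℝ g y + g y • fderiv ℝ f y) _ x :=
    ((hf.differentiableAt (by simp)).hasFDerivAt.smul hD2g.hasFDerivAt).add
      ((hg.differentiableAt (by simp)).hasFDerivAt.smul hD2f.hasFDerivAt)
  rw [hfg.fderiv_eq, hderiv.fderiv]
  simp only [_root_.add_apply, _root_.smul_apply, ContinuousLinearMap.smulRight_apply,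
    smul_eq_mul]
  ring

end SecondDerivative

section Hessian

variable {n : ℕ}

lemma gradient_apply_eq_fderiv (f : EuclideanSpace ℝ (Fin n) → ℝ) (x : EuclideanSpace ℝ (Fin n))
    (i : Fin n) : gradient f x i = fderiv ℝ f x (EuclideanSpace.single i 1) := by
  rw [← inner_gradient_left, EuclideanSpace.inner_single_right]
  simp

lemma hess_apply (f : EuclideanSpace ℝ (Fin n) → ℝ) (x : EuclideanSpace ℝ (Fin n)) (i j : Fin n) :
    hess f x i j
      = fderiv ℝ (fderiv ℝ f) x (EuclideanSpace.single i 1) (EuclideanSpace.single j 1) := by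
  simp [hess, iteratedFDeriv_two_apply]

lemma hess_mul {f g : EuclideanSpace ℝ (Fin n) → ℝ} {x : EuclideanSpace ℝ (Fin n)}
    (hf : ContDiffAt ℝ 2 f x) (hg : ContDiffAt ℝ 2 g x) :
    hess (fun y => f y * g y) x
      = productHessian (f x) (g x) (hess f x) (hess g x) (gradient f x) (gradient g x) := by
  ext i j
  simp only [productHessian, Matrix.add_apply, Matrix.smul_apply, vecMulVec_apply, smul_eq_mul,
    hess_apply, fderiv_fderiv_mul_apply hf hg, gradient_apply_eq_fderiv]

end Hessian

lemma exists_ne_zero_of_rank_ne_zero {ι κ : Type*} [Fintype κ]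
    (t : κ → EuclideanSpace ℝ ι) (h : (Matrix.of fun i j => t j i).rank ≠ 0) : ∃ j, t j ≠ 0 := by
  contrapose! h
  have hzero : (Matrix.of fun i j => t j i) = 0 := by
    ext i j
    simp [h j]
  rw [hzero, rank_zero]

theorem simplex_calculus_hessian_product_rule_error_bound_general {n m k : ℕ}
    (f g : EuclideanSpace ℝ (Fin n) → ℝ) (x0 : EuclideanSpace ℝ (Fin n))
    (Δbar ΔS ΔT Ef Eg EF EG : ℝ)
    (s : Fin m → EuclideanSpace ℝ (Fin n)) (S : Matrix (Fin n) (Fin m) ℝ)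
    (t : Fin k → EuclideanSpace ℝ (Fin n)) (T : Matrix (Fin n) (Fin k) ℝ)
    (hTdef : T = Matrix.of fun i j => t j i) (hTrank : T.rank = n)
    (hΔS : IsGreatest (Set.range fun i => ‖s i‖) ΔS)
    (hΔT : IsGreatest (Set.range fun j => ‖t j‖) ΔT)
    (hball : ∀ i, ball (x0 + s i) ΔT ⊆ ball x0 Δbar)
    (hf : ContDiffOn ℝ 3 f (ball x0 Δbar)) (hg : ContDiffOn ℝ 3 g (ball x0 Δbar))
    (hEf : ‖toE (simplexGrad f t T x0) - gradient f x0‖ ≤ Ef * max ΔS ΔT)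
    (hEg : ‖toE (simplexGrad g t T x0) - gradient g x0‖ ≤ Eg * max ΔS ΔT)
    (hEF : opNorm (nestedSetHessian f s S t T x0 - hess f x0) ≤ EF * max ΔS ΔT)
    (hEG : opNorm (nestedSetHessian g s S t T x0 - hess g x0) ≤ EG * max ΔS ΔT) :
    opNorm (g x0 • nestedSetHessian f s S t T x0
        + f x0 • nestedSetHessian g s S t T x0
        + vecMulVec (simplexGrad f t T x0) (simplexGrad g t T x0)
        + vecMulVec (simplexGrad g t T x0) (simplexGrad f t T x0)
        - hess (fun x => f x * g x) x0)
      ≤ (EF * |g x0| + EG * |f x0|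
          + 2 * (Ef * Eg * max ΔS ΔT + Eg * ‖gradient f x0‖
              + Ef * ‖gradient g x0‖)) * max ΔS ΔT := by
  have hprod : hess (fun x => f x * g x) x0
      = productHessian (f x0) (g x0) (hess f x0) (hess g x0) (gradient f x0) (gradient g x0) := by
    rcases n.eq_zero_or_pos with rfl | hn
    · exact Subsingleton.elim _ _
    obtain ⟨j, hj⟩ := exists_ne_zero_of_rank_ne_zero t (by rw [← hTdef, hTrank]; exact hn.ne')
    obtain ⟨⟨i, -⟩, -⟩ := hΔS
    have hΔT0 : 0 < ΔT := (norm_pos_iff.2 hj).trans_le (hΔT.2 ⟨j, rfl⟩)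
    have hx0 : ball x0 Δbar ∈ 𝓝 x0 :=
      ball_mem_nhds x0 (pos_of_mem_ball (hball i (mem_ball_self hΔT0)))
    exact hess_mul ((hf.contDiffAt hx0).of_le (by norm_num))
      ((hg.contDiffAt hx0).of_le (by norm_num))
  rw [opNorm_eq_l2_opNorm] at hEF hEG ⊢
  change ‖productHessian (f x0) (g x0) _ _ (toE (simplexGrad f t T x0))
      (toE (simplexGrad g t T x0)) - hess (fun x => f x * g x) x0‖ ≤ _
  rw [hprod]
  calc _ ≤ _ := l2_opNorm_productHessian_sub_le ..
    _ ≤ |g x0| * (EF * max ΔS ΔT) + |f x0| * (EG * max ΔS ΔT)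
          + 2 * (Ef * max ΔS ΔT * (Eg * max ΔS ΔT) + Ef * max ΔS ΔT * ‖gradient g x0‖
            + ‖gradient f x0‖ * (Eg * max ΔS ΔT)) := by
      gcongr
      exact (norm_nonneg _).trans hEf
    _ = _ := by ring

/-- error bound for the product rule of the simplex calculus
Hessian ∇²_{sc}(fg) = g(x⁰)∇²_s f + f(x⁰)∇²_s g + ∇_s f(∇_s g)ᵀ + ∇_s g(∇_s f)ᵀ. -/
theorem simplex_calculus_hessian_product_rule_error_bound {n m k : ℕ}
    (f g : EuclideanSpace ℝ (Fin n) → ℝ) (x0 : EuclideanSpace ℝ (Fin n))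
    (Δbar ΔS ΔT Ef Eg EF EG : ℝ)
    (s : Fin m → EuclideanSpace ℝ (Fin n)) (S : Matrix (Fin n) (Fin m) ℝ)
    (hSdef : S = Matrix.of fun i j => s j i) (hSrank : S.rank = n)
    (t : Fin k → EuclideanSpace ℝ (Fin n)) (T : Matrix (Fin n) (Fin k) ℝ)
    (hTdef : T = Matrix.of fun i j => t j i) (hTrank : T.rank = n)
    (hΔS : IsGreatest (Set.range fun i => ‖s i‖) ΔS)
    (hΔT : IsGreatest (Set.range fun j => ‖t j‖) ΔT)
    (hball : ∀ i, ball (x0 + s i) ΔT ⊆ ball x0 Δbar)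
    (hf : ContDiffOn ℝ 3 f (ball x0 Δbar)) (hg : ContDiffOn ℝ 3 g (ball x0 Δbar))
    (hEf : ‖toE (simplexGrad f t T x0) - gradient f x0‖ ≤ Ef * max ΔS ΔT)
    (hEg : ‖toE (simplexGrad g t T x0) - gradient g x0‖ ≤ Eg * max ΔS ΔT)
    (hEF : opNorm (nestedSetHessian f s S t T x0 - hess f x0) ≤ EF * max ΔS ΔT)
    (hEG : opNorm (nestedSetHessian g s S t T x0 - hess g x0) ≤ EG * max ΔS ΔT) :
    opNorm (g x0 • nestedSetHessian f s S t T x0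
        + f x0 • nestedSetHessian g s S t T x0
        + vecMulVec (simplexGrad f t T x0) (simplexGrad g t T x0)
        + vecMulVec (simplexGrad g t T x0) (simplexGrad f t T x0)
        - hess (fun x => f x * g x) x0)
      ≤ (EF * |g x0| + EG * |f x0|
          + 2 * (Ef * Eg * max ΔS ΔT + Eg * ‖gradient f x0‖
              + Ef * ‖gradient g x0‖)) * max ΔS ΔT :=
  simplex_calculus_hessian_product_rule_error_bound_general f g x0 Δbar ΔS ΔT Ef Eg EF EG s S t T
    hTdef hTrank hΔS hΔT hball hf hg hEf hEg hEF hEG
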